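/- arXiv:1610.06148 — 2 statements merged into one kernel-verified Lean document; each statement's English description precedes it below -/
import Mathlib

section
/- Let y₁, y₂, y₃, y₄ be positive reals with y₃ ≤ y₄ ≤ min(y₁, y₂), and suppose f > 1 satisfies (y₁² + y₂² + 1)f² - 2y₃y₄f - (y₁² + y₂² + y₃² + y₄² + 1) = 0. Then f < 2. -/
theorem stmt_1 (y₁ y₂ y₃ y₄ f : ℝ)
    (hy₁ : 0 < y₁) (hy₂ : 0 < y₂) (hy₃ : 0 < y₃) (hy₄ : 0 < y₄)
    (h34 : y₃ ≤ y₄) (h4 : y₄ ≤ min y₁ y₂) (hf : 1 < f)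
    (hroot : (y₁ ^ 2 + y₂ ^ 2 + 1) * f ^ 2 - 2 * y₃ * y₄ * f
      - (y₁ ^ 2 + y₂ ^ 2 + y₃ ^ 2 + y₄ ^ 2 + 1) = 0) :
    f < 2 := by
  have h41 : y₄ ≤ y₁ := le_trans h4 (min_le_left _ _)
  have h42 : y₄ ≤ y₂ := le_trans h4 (min_le_right _ _)
  have hsq1 : y₄ ^ 2 ≤ y₁ ^ 2 := by nlinarith
  have hsq2 : y₄ ^ 2 ≤ y₂ ^ 2 := by nlinarith
  have hsq3 : y₃ ^ 2 ≤ y₄ ^ 2 := by nlinarith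
  have hab : 2 * y₃ * y₄ ≤ y₃ ^ 2 + y₄ ^ 2 := by nlinarith [sq_nonneg (y₃ - y₄)]
  by_contra h
  push_neg at h
  have key : 0 ≤ (f - 2) * ((y₁ ^ 2 + y₂ ^ 2 + 1) * (f + 2) - 2 * y₃ * y₄) := by
    apply mul_nonneg (by linarith)
    nlinarith
  nlinarith
end

section
/- The quadratic form -15x₀² + x₁² + x₂² + x₃² over ℚ does not represent zero nontrivially, i.e., the lattice [-15] ⊕ [1] ⊕ [1] ⊕ [1] is anisotropic. -/
lemma zmod8_even (a b c d : ZMod 8) (h : a^2+b^2+c^2 = 15*d^2) :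
    (ZMod.castHom (show (2:ℕ) ∣ 8 by norm_num) (ZMod 2)) a = 0 ∧
    (ZMod.castHom (show (2:ℕ) ∣ 8 by norm_num) (ZMod 2)) b = 0 ∧
    (ZMod.castHom (show (2:ℕ) ∣ 8 by norm_num) (ZMod 2)) c = 0 ∧
    (ZMod.castHom (show (2:ℕ) ∣ 8 by norm_num) (ZMod 2)) d = 0 := by
  revert h; revert a b c d; decide

lemma int_even (a b c d : ℤ) (h : a^2+b^2+c^2 = 15*d^2) :
    2 ∣ a ∧ 2 ∣ b ∧ 2 ∣ c ∧ 2 ∣ d := by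
  have h8 : (a : ZMod 8)^2 + (b : ZMod 8)^2 + (c : ZMod 8)^2 = 15*(d : ZMod 8)^2 := by
    have := congrArg (Int.cast : ℤ → ZMod 8) h
    push_cast at this
    exact this
  set f := ZMod.castHom (show (2:ℕ) ∣ 8 by norm_num) (ZMod 2)
  obtain ⟨ha, hb, hc, hd⟩ := zmod8_even _ _ _ _ h8
  have key : ∀ x : ℤ, f ((x : ℤ) : ZMod 8) = 0 → 2 ∣ x := by
    intro x hx
    rw [map_intCast f x] at hx
    exact (ZMod.intCast_zmod_eq_zero_iff_dvd x 2).1 hx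
  exact ⟨key a ha, key b hb, key c hc, key d hd⟩

lemma int_descent : ∀ n : ℕ, ∀ d a b c : ℤ, d.natAbs = n →
    a^2+b^2+c^2 = 15*d^2 → a = 0 ∧ b = 0 ∧ c = 0 ∧ d = 0 := by
  intro n
  induction n using Nat.strong_induction_on with
  | _ n ih =>
    intro d a b c hn h
    rcases eq_or_ne d 0 with hd0 | hd0
    · subst hd0
      have h' : a^2+b^2+c^2 = 0 := by nlinarith
      have ha : a = 0 := by nlinarith [sq_nonneg a, sq_nonneg b, sq_nonneg c]
      have hb : b = 0 := by nlinarith [sq_nonneg a, sq_nonneg b, sq_nonneg c]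
      have hc : c = 0 := by nlinarith [sq_nonneg a, sq_nonneg b, sq_nonneg c]
      exact ⟨ha, hb, hc, rfl⟩
    · obtain ⟨⟨a', rfl⟩, ⟨b', rfl⟩, ⟨c', rfl⟩, ⟨d', rfl⟩⟩ := int_even a b c d h
      have h' : a'^2+b'^2+c'^2 = 15*d'^2 := by nlinarith
      have hlt : d'.natAbs < n := by
        subst hn
        have : d' ≠ 0 := by rintro rfl; simp at hd0
        omega
      obtain ⟨ha, hb, hc, hd⟩ := ih d'.natAbs hlt d' a' b' c' rfl h'
      exact ⟨by rw [ha]; ring, by rw [hb]; ring, by rw [hc]; ring, by rw [hd]; ring⟩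

theorem stmt_6 (x₀ x₁ x₂ x₃ : ℚ)
    (h : -15 * x₀ ^ 2 + x₁ ^ 2 + x₂ ^ 2 + x₃ ^ 2 = 0) :
    x₀ = 0 ∧ x₁ = 0 ∧ x₂ = 0 ∧ x₃ = 0 := by
  set n : ℚ := (x₀.den : ℚ) * x₁.den * x₂.den * x₃.den with hn
  have hden : ∀ q : ℚ, ((q.num : ℚ)) = q * q.den := by
    intro q
    have hq : (q.den : ℚ) ≠ 0 := by exact_mod_cast q.den_nz
    rw [← div_eq_iff hq]
    exact Rat.num_div_den q
  -- integer multiples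
  set a₀ : ℤ := x₀.num * (x₁.den * x₂.den * x₃.den) with ha₀
  set a₁ : ℤ := x₁.num * (x₀.den * x₂.den * x₃.den) with ha₁
  set a₂ : ℤ := x₂.num * (x₀.den * x₁.den * x₃.den) with ha₂
  set a₃ : ℤ := x₃.num * (x₀.den * x₁.den * x₂.den) with ha₃
  have e₀ : (a₀ : ℚ) = x₀ * n := by push_cast [ha₀, hn, hden x₀]; ring
  have e₁ : (a₁ : ℚ) = x₁ * n := by push_cast [ha₁, hn, hden x₁]; ring
  have e₂ : (a₂ : ℚ) = x₂ * n := by push_cast [ha₂, hn, hden x₂]; ring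
  have e₃ : (a₃ : ℚ) = x₃ * n := by push_cast [ha₃, hn, hden x₃]; ring
  have hQ : (a₁ : ℚ)^2 + (a₂ : ℚ)^2 + (a₃ : ℚ)^2 = 15 * (a₀ : ℚ)^2 := by
    rw [e₀, e₁, e₂, e₃]; linear_combination n^2 * h
  have hZ : a₁^2 + a₂^2 + a₃^2 = 15 * a₀^2 := by exact_mod_cast hQ
  obtain ⟨h1, h2, h3, h0⟩ := int_descent a₀.natAbs a₀ a₁ a₂ a₃ rfl hZ
  have hnpos : n ≠ 0 := by
    have : (0:ℚ) < n := by
      rw [hn]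
      have h0 := x₀.pos; have h1 := x₁.pos; have h2 := x₂.pos; have h3 := x₃.pos
      positivity
    exact ne_of_gt this
  have q0 : x₀ = 0 := by
    have := e₀; rw [h0] at this; simpa [hnpos, eq_comm] using (mul_eq_zero.1 this.symm).resolve_right hnpos
  have q1 : x₁ = 0 := by
    have := e₁; rw [h1] at this; simpa using (mul_eq_zero.1 this.symm).resolve_right hnpos
  have q2 : x₂ = 0 := by
    have := e₂; rw [h2] at this; simpa using (mul_eq_zero.1 this.symm).resolve_right hnpos
  have q3 : x₃ = 0 := by
    have := e₃; rw [h3] at this; simpa using (mul_eq_zero.1 this.symm).resolve_right hnpos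
  exact ⟨q0, q1, q2, q3⟩
end
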